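/- Let ρ > 0, τ := 1/ρ, δ ∈ [0,1], μ > 0, λ > 0 constants, and let g : ℝ → ℝ₊ be bounded, measurable, and satisfy g(t) → 0 as t → +∞. Fix s ≥ 0 and define β(s,t) := λ ∫_{s−τ}^{t−τ} exp(−μ(t−τ−u) − ∫_0^{δτ} g(u+w) dw) du for t ≥ s. Then β(s,t) → λ/μ as t → +∞; in particular β(s,t) is asymptotically equivalent to (1 − e^{−(t−s)μ}) λ/μ as t → +∞. -/

import Mathlib

/-!
Write `G u = ∫_0^{δτ} g(u+w) dw` for the killing accumulated before maturation. Since `g` is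
bounded and tends to `0`, `G` is continuous, nonnegative and tends to `0`, so the survival
factor `exp(-G u)` is bounded by `1` and tends to `1`. Substituting `v = t - τ - u` turns `β(s,t)`
into `λ ∫_0^{t-s} e^{-μv} exp(-G(t-τ-v)) dv`, and dominated convergence (with dominating
function `e^{-μv}` on `(0, ∞)`) gives the limit `λ ∫_0^∞ e^{-μv} dv = λ/μ`. The equivalence
follows because `(1 - e^{-(t-s)μ}) λ/μ` has the same nonzero limit.
-/

open Filter Asymptotics
open MeasureTheory Set Topology

theorem tendsto_atTop_sub_const (c : ℝ) : Tendsto (fun x : ℝ => x - c) atTop atTop :=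
  tendsto_atTop_atTop.2 fun b => ⟨b + c, fun _ _ => by linarith⟩

section IntervalIntegral

variable {E : Type*} [NormedAddCommGroup E]

theorem intervalIntegrable_of_norm_le {g : ℝ → E} (hg : AEStronglyMeasurable g) {C : ℝ}
    (hC : ∀ x, ‖g x‖ ≤ C) (a b : ℝ) : IntervalIntegrable g volume a b :=
  (intervalIntegrable_iff').2 <|
    Measure.integrableOn_of_bounded measure_Icc_lt_top.ne hg (ae_of_all _ hC)

variable [NormedSpace ℝ E]

theorem continuous_intervalIntegral_comp_add {g : ℝ → E}
    (hg : ∀ a b, IntervalIntegrable g volume a b) (a b : ℝ) :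
    Continuous fun u => ∫ w in a..b, g (u + w) := by
  have hprim := intervalIntegral.continuous_primitive hg 0
  have hdiff : (fun u => ∫ w in a..b, g (u + w)) =
      fun u => (∫ x in 0..u + b, g x) - ∫ x in 0..u + a, g x := by
    ext u
    rw [intervalIntegral.integral_comp_add_left,
      intervalIntegral.integral_interval_sub_left (hg _ _) (hg _ _)]
  rw [hdiff]
  exact (hprim.comp (continuous_add_const b)).sub (hprim.comp (continuous_add_const a))

theorem tendsto_intervalIntegral_comp_add_atTop {g : ℝ → E} (hg : Tendsto g atTop (𝓝 0))
    (a b : ℝ) : Tendsto (fun u => ∫ w in a..b, g (u + w)) atTop (𝓝 0) := by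
  refine NormedAddGroup.tendsto_nhds_zero.2 fun ε hε => ?_
  have hη : 0 < ε / (|b - a| + 1) := by positivity
  obtain ⟨A, hA⟩ := eventually_atTop.1 (NormedAddGroup.tendsto_nhds_zero.1 hg _ hη)
  filter_upwards [eventually_ge_atTop (A - min a b)] with u hu
  calc ‖∫ w in a..b, g (u + w)‖ ≤ ε / (|b - a| + 1) * |b - a| :=
        intervalIntegral.norm_integral_le_of_norm_le_const fun w hw =>
          (hA _ (by linarith [hw.1])).le
    _ < ε := by
        rw [div_mul_eq_mul_div, div_lt_iff₀ (by positivity)]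
        nlinarith [abs_nonneg (b - a)]

end IntervalIntegral

theorem integral_exp_neg_mul_sub_eq_setIntegral_indicator (f : ℝ → ℝ) (μ : ℝ) {a r : ℝ}
    (har : a ≤ r) :
    ∫ u in a..r, Real.exp (-(μ * (r - u))) * f u =
      ∫ v in Ioi 0, (Iic (r - a)).indicator (fun v => Real.exp (-(μ * v)) * f (r - v)) v := by
  rw [setIntegral_indicator measurableSet_Iic, Ioi_inter_Iic,
    ← intervalIntegral.integral_of_le (sub_nonneg.2 har)]
  simpa using intervalIntegral.integral_comp_sub_left
    (fun v => Real.exp (-(μ * v)) * f (r - v)) r (a := a) (b := r)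

theorem setIntegral_Ioi_exp_neg_mul {μ : ℝ} (hμ : 0 < μ) :
    ∫ v in Ioi (0 : ℝ), Real.exp (-(μ * v)) = 1 / μ := by
  simpa [neg_mul] using integral_exp_mul_Ioi (neg_lt_zero.2 hμ) 0

theorem tendsto_integral_exp_neg_mul_sub_atTop {f : ℝ → ℝ} {L μ M : ℝ} (hμ : 0 < μ)
    (hf : Continuous f) (hM : ∀ u, |f u| ≤ M) (hL : Tendsto f atTop (𝓝 L)) (a : ℝ) :
    Tendsto (fun r => ∫ u in a..r, Real.exp (-(μ * (r - u))) * f u) atTop (𝓝 (L / μ)) := by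
  have hlimit : ∫ v in Ioi 0, Real.exp (-(μ * v)) * L = L / μ := by
    rw [integral_mul_const, setIntegral_Ioi_exp_neg_mul hμ]
    ring
  rw [← hlimit]
  refine (tendsto_integral_filter_of_dominated_convergence
    (F := fun r => (Iic (r - a)).indicator fun v => Real.exp (-(μ * v)) * f (r - v))
    (fun v => M * Real.exp (-(μ * v))) ?meas ?bound ?integrable ?lim).congr' ?eq
  case eq =>
    filter_upwards [eventually_ge_atTop a] with r hr
    exact (integral_exp_neg_mul_sub_eq_setIntegral_indicator f μ hr).symm
  case meas =>
    exact .of_forall fun r =>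
      (Continuous.aestronglyMeasurable (by fun_prop)).indicator measurableSet_Iic
  case bound =>
    refine .of_forall fun r => .of_forall fun v => (norm_indicator_le_norm_self _ _).trans ?_
    rw [norm_mul, Real.norm_eq_abs, Real.abs_exp, mul_comm]
    exact mul_le_mul_of_nonneg_right (hM _) (Real.exp_pos _).le
  case integrable =>
    simpa only [neg_mul] using (exp_neg_integrableOn_Ioi 0 hμ).const_mul M
  case lim =>
    refine .of_forall fun v => ?_
    have hshift : Tendsto (fun r => f (r - v)) atTop (𝓝 L) :=
      hL.comp (tendsto_atTop_sub_const v)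
    refine (hshift.const_mul _).congr' ?_
    filter_upwards [eventually_ge_atTop (v + a)] with r hr
    rw [indicator_of_mem (mem_Iic.2 (by linarith))]

theorem beta_tendsto_equilibrium_general (rho : ℝ) (hrho : 0 < rho)
    (tau : ℝ) (htau : tau = 1 / rho)
    (δ : ℝ) (hδ : δ ∈ Set.Icc (0:ℝ) 1) (mu : ℝ) (hmu : 0 < mu)
    (lam : ℝ) (hlam : 0 < lam)
    (g : ℝ → ℝ) (hg_meas : Measurable g) (hg0 : ∀ t, 0 ≤ g t)
    (C : ℝ) (hgC : ∀ t, g t ≤ C)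
    (hgtend : Tendsto g atTop (nhds 0))
    (s : ℝ)
    (β : ℝ → ℝ)
    (hβ : ∀ t, β t =
      lam * ∫ u in (s - tau)..(t - tau),
        Real.exp (-(mu * (t - tau - u)) - ∫ w in (0:ℝ)..(δ * tau), g (u + w))) :
    Tendsto β atTop (nhds (lam / mu)) ∧
    β ~[atTop] (fun t => (1 - Real.exp (-(t - s) * mu)) * (lam / mu)) := by
  have hT : 0 ≤ δ * tau := mul_nonneg hδ.1 (htau ▸ one_div_pos.2 hrho).le
  have hg_int : ∀ a b, IntervalIntegrable g volume a b :=
    intervalIntegrable_of_norm_le hg_meas.aestronglyMeasurable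
      (fun x => (Real.norm_of_nonneg (hg0 x)).trans_le (hgC x))
  have hsurv : Tendsto (fun u => Real.exp (-∫ w in (0:ℝ)..(δ * tau), g (u + w))) atTop (𝓝 1) := by
    simpa only [neg_zero, Real.exp_zero, Function.comp_def] using
      (Real.continuous_exp.tendsto _).comp
        (tendsto_intervalIntegral_comp_add_atTop hgtend 0 (δ * tau)).neg
  have hsurv_le : ∀ u, |Real.exp (-∫ w in (0:ℝ)..(δ * tau), g (u + w))| ≤ 1 := fun u => by
    rw [Real.abs_exp, Real.exp_le_one_iff, neg_nonpos]
    exact intervalIntegral.integral_nonneg hT fun _ _ => hg0 _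
  have hβ_lim : Tendsto β atTop (𝓝 (lam / mu)) := by
    have hint := (tendsto_integral_exp_neg_mul_sub_atTop hmu
      (continuous_intervalIntegral_comp_add hg_int 0 (δ * tau)).neg.rexp
      hsurv_le hsurv (s - tau)).comp (tendsto_atTop_sub_const tau)
    rw [← mul_one_div]
    refine (hint.const_mul lam).congr fun t => ?_
    simp only [Function.comp_apply, Pi.neg_apply, hβ, sub_eq_add_neg (-(mu * _)), Real.exp_add]
  have hrhs : Tendsto (fun t => (1 - Real.exp (-(t - s) * mu)) * (lam / mu)) atTop
      (𝓝 (lam / mu)) := by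
    have hdecay : Tendsto (fun t => Real.exp (-(t - s) * mu)) atTop (𝓝 0) :=
      Real.tendsto_exp_atBot.comp
        ((tendsto_neg_atTop_atBot.comp (tendsto_atTop_sub_const s)).atBot_mul_const hmu)
    simpa using ((tendsto_const_nhds (x := (1 : ℝ))).sub hdecay).mul_const (lam / mu)
  have hne : lam / mu ≠ 0 := by positivity
  exact ⟨hβ_lim, ((isEquivalent_const_iff_tendsto hne).2 hβ_lim).trans
    ((isEquivalent_const_iff_tendsto hne).2 hrhs).symm⟩

/-- Section 2.3.3: when the killing function `g` vanishes at infinity, the parameter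
`β(s,t) = λ ∫_{s−τ}^{t−τ} exp(−μ(t−τ−u) − ∫_0^{δτ} g(u+w) dw) du` tends to `λ/μ` as
`t → ∞`; in particular it is asymptotically equivalent to `(1 − e^{−(t−s)μ}) λ/μ`. -/
theorem beta_tendsto_equilibrium (rho : ℝ) (hrho : 0 < rho)
    (tau : ℝ) (htau : tau = 1 / rho)
    (δ : ℝ) (hδ : δ ∈ Set.Icc (0:ℝ) 1) (mu : ℝ) (hmu : 0 < mu)
    (lam : ℝ) (hlam : 0 < lam)
    (g : ℝ → ℝ) (hg_meas : Measurable g) (hg0 : ∀ t, 0 ≤ g t)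
    (C : ℝ) (hgC : ∀ t, g t ≤ C)
    (hgtend : Tendsto g atTop (nhds 0))
    (s : ℝ) (hs : 0 ≤ s)
    (β : ℝ → ℝ)
    (hβ : ∀ t, β t =
      lam * ∫ u in (s - tau)..(t - tau),
        Real.exp (-(mu * (t - tau - u)) - ∫ w in (0:ℝ)..(δ * tau), g (u + w))) :
    Tendsto β atTop (nhds (lam / mu)) ∧
    β ~[atTop] (fun t => (1 - Real.exp (-(t - s) * mu)) * (lam / mu)) :=
  beta_tendsto_equilibrium_general rho hrho tau htau δ hδ mu hmu lam hlam g hg_meas hg0 C hgC hgtend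
    s β hβ
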